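/- Let A = [[s,1],[0,s^{-1}]], B = [[s,0],[-y,s^{-1}]] over C[s^{\pm1},y] and for m >= 1 let S_m = I + BA^{-1} + ... + (BA^{-1})^{m-1}. Then det(S_{m+1}) = det(S_m) + tr(BA^{-1} + (BA^{-1})^2 + ... + (BA^{-1})^m) + 1, and the total degree of det(S_m) in s and y is m - 1. -/

import Mathlib

noncomputable section

/-- The ring of Laurent polynomials in `s` and ordinary polynomials in `y`
over `ℂ`, i.e. `ℂ[s^{±1}, y]`. -/
abbrev R2 : Type := AddMonoidAlgebra ℂ (ℤ × ℕ)

/-- The variable `s`. -/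
def s : R2 := AddMonoidAlgebra.single (1, 0) 1
/-- The inverse variable `s⁻¹`. -/
def sInv : R2 := AddMonoidAlgebra.single (-1, 0) 1
/-- The variable `y`. -/
def y : R2 := AddMonoidAlgebra.single (0, 1) 1

/-- `A = [[s,1],[0,s⁻¹]]`. -/
def A : Matrix (Fin 2) (Fin 2) R2 := !![s, 1; 0, sInv]
/-- `B = [[s,0],[-y,s⁻¹]]`. -/
def B : Matrix (Fin 2) (Fin 2) R2 := !![s, 0; -y, sInv]


/-- The total degree of a Laurent polynomial in `s` and `y`. -/
def deg (f : R2) : WithBot ℤ := f.coeff.support.sup fun p => ((p.1 + (p.2 : ℤ)) : WithBot ℤ)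

/-!
Write `M = BA⁻¹ = [[1, -s], [-s⁻¹y, y + 1]]`, so `det M = 1` and `tr M = y + 2`. For `2 × 2`
matrices `det (1 + K) = det K + tr K + 1`; applied to `S_{m+1} = 1 + M S_m` this is the
recursion. For the degree, `(M - 1) S_m = M^m - 1` and `det (K - 1) = det K - tr K + 1` give
`-y · det S_m = 2 - tr M^m`. By Cayley–Hamilton `tr M^m = C_m(y + 2)`, where `C_m` is the
normalized Chebyshev polynomial (`C_m(t + t⁻¹) = t^m + t^{-m}`), of degree `m` with `C_m(2) = 2`.
So `det S_m = (C_m(y + 2) - 2) / y` is a polynomial in `y` alone, of degree `m - 1`.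
-/

open Finset Polynomial

namespace Matrix

variable {R : Type*} [CommRing R] (N : Matrix (Fin 2) (Fin 2) R)

theorem det_one_add_fin_two : (1 + N).det = N.det + N.trace + 1 := by
  simp [det_fin_two, trace_fin_two]
  ring

theorem det_sub_one_fin_two : (N - 1).det = N.det - N.trace + 1 := by
  simp [det_fin_two, trace_fin_two]
  ring

theorem sq_fin_two_eq_trace_smul_sub_det_smul : N ^ 2 = N.trace • N - N.det • 1 := by
  ext i j
  fin_cases i <;> fin_cases j <;> simp [sq, mul_apply, trace_fin_two, det_fin_two] <;> ring

variable {N}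

theorem trace_pow_eq_eval_chebyshev_C (hN : N.det = 1) :
    ∀ n : ℕ, (N ^ n).trace = (Chebyshev.C R n).eval N.trace
  | 0 => by simp [Chebyshev.C_zero]
  | 1 => by simp [Chebyshev.C_one]
  | n + 2 => by
    have h : N ^ (n + 2) = N.trace • N ^ (n + 1) - N ^ n := by
      rw [pow_add, sq_fin_two_eq_trace_smul_sub_det_smul, hN, one_smul, mul_sub, mul_smul_comm,
        ← pow_succ, mul_one]
    push_cast
    rw [h, Chebyshev.C_add_two, trace_sub, trace_smul, eval_sub, eval_mul, eval_X,
      trace_pow_eq_eval_chebyshev_C hN n, trace_pow_eq_eval_chebyshev_C hN (n + 1), smul_eq_mul,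
      Nat.cast_succ]

theorem det_geom_sum_succ_of_det_eq_one (hN : N.det = 1) (m : ℕ) :
    (∑ j ∈ range (m + 1), N ^ j).det =
      (∑ j ∈ range m, N ^ j).det + (∑ j ∈ Icc 1 m, N ^ j).trace + 1 := by
  have hIcc : ∑ j ∈ Icc 1 m, N ^ j = N * ∑ j ∈ range m, N ^ j := by
    rw [mul_sum, ← Ico_add_one_right_eq_Icc, sum_Ico_eq_sum_range]
    simp [pow_add]
  rw [geom_sum_succ, add_comm, det_one_add_fin_two, hIcc, det_mul, hN, one_mul]

theorem two_sub_trace_mul_det_geom_sum (hN : N.det = 1) (m : ℕ) :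
    (2 - N.trace) * (∑ j ∈ range m, N ^ j).det = 2 - (N ^ m).trace := by
  have h := congrArg det (mul_geom_sum N m)
  rw [det_mul, det_sub_one_fin_two, det_sub_one_fin_two, det_pow, hN, one_pow] at h
  linear_combination h

end Matrix

theorem Polynomial.Chebyshev.natDegree_C_natCast (R : Type*) [CommRing R] [Nontrivial R] :
    ∀ n : ℕ, (C R n).natDegree = n
  | 0 => by simp [C_zero]
  | 1 => by simp [C_one]
  | n + 2 => by
    have hd := natDegree_C_natCast R (n + 1)
    have hd' := natDegree_C_natCast R n
    have hXd : (X * C R (n + 1 : ℕ)).natDegree = n + 2 := by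
      rw [natDegree_X_mul (ne_zero_of_natDegree_gt (n := 0) (by omega)), hd]
    have hlt : (C R n).natDegree < (X * C R (n + 1 : ℕ)).natDegree := by omega
    rw [show ((n + 2 : ℕ) : ℤ) = (n : ℤ) + 2 by push_cast; ring, C_add_two, ← Nat.cast_succ,
      natDegree_sub_eq_left_of_natDegree_lt hlt, hXd]

theorem s_mul_sInv : s * sInv = 1 := by
  simp [s, sInv, AddMonoidAlgebra.single_mul_single, AddMonoidAlgebra.one_def]
  rfl

theorem inv_A : A⁻¹ = !![sInv, -1; 0, s] := by
  have hA : A.det = 1 := by simp [A, Matrix.det_fin_two_of, s_mul_sInv]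
  rw [Matrix.inv_def, hA, Ring.inverse_one, one_smul, A, Matrix.adjugate_fin_two_of]
  simp

theorem det_B_mul_inv_A : (B * A⁻¹).det = 1 := by
  simp [B, inv_A, Matrix.det_fin_two_of, s_mul_sInv, mul_comm sInv s]
  linear_combination (-y) * s_mul_sInv

theorem trace_B_mul_inv_A : (B * A⁻¹).trace = y + 2 := by
  rw [B, inv_A, Matrix.mul_fin_two, Matrix.trace_fin_two_of, mul_comm sInv s, s_mul_sInv]
  ring

theorem aeval_y_eq_mapDomain (P : ℂ[X]) :
    aeval y P = AddMonoidAlgebra.mapDomain (AddMonoidHom.inr ℤ ℕ) P.toFinsupp := by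
  have h : aeval y = (AddMonoidAlgebra.mapDomainAlgHom ℂ ℂ (AddMonoidHom.inr ℤ ℕ)).comp
      (toFinsuppIsoAlg ℂ).toAlgHom :=
    algHom_ext (by simp [y])
  exact congr($h P)

theorem deg_aeval_y {P : ℂ[X]} (hP : P ≠ 0) :
    deg (aeval y P) = ((P.natDegree : ℤ) : WithBot ℤ) := by
  have hinr : Function.Injective (AddMonoidHom.inr ℤ ℕ) := Prod.mk_right_injective 0
  rw [deg, aeval_y_eq_mapDomain, AddMonoidAlgebra.coeff_mapDomain,
    Finsupp.mapDomain_support_of_injective hinr, sup_image]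
  show P.support.sup (fun n => (((0 : ℤ) + n : ℤ) : WithBot ℤ)) = _
  simp only [zero_add]
  exact le_antisymm (Finset.sup_le fun n hn => by exact_mod_cast le_natDegree_of_mem_supp n hn)
    (Finset.le_sup (f := fun n : ℕ => ((n : ℤ) : WithBot ℤ)) (natDegree_mem_support_of_nonzero hP))

def detPoly (m : ℕ) : ℂ[X] := divX ((Chebyshev.C ℂ m).comp (X + 2))

theorem X_mul_detPoly (m : ℕ) : X * detPoly m = (Chebyshev.C ℂ m).comp (X + 2) - 2 := by
  have h := X_mul_divX_add ((Chebyshev.C ℂ m).comp (X + 2))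
  rw [coeff_zero_eq_eval_zero, eval_comp] at h
  simp only [eval_add, eval_X, eval_ofNat, zero_add, Chebyshev.C_eval_two, map_ofNat C] at h
  rw [detPoly, eq_sub_iff_add_eq, h]

theorem natDegree_chebyshev_C_comp_X_add_two (m : ℕ) :
    ((Chebyshev.C ℂ m).comp (X + 2)).natDegree = m := by
  rw [natDegree_comp, Chebyshev.natDegree_C_natCast,
    show ((X : ℂ[X]) + 2).natDegree = 1 by compute_degree!, mul_one]

theorem natDegree_detPoly (m : ℕ) : (detPoly m).natDegree = m - 1 := by
  rw [detPoly, natDegree_divX_eq_natDegree_tsub_one, natDegree_chebyshev_C_comp_X_add_two]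

theorem detPoly_ne_zero {m : ℕ} (hm : 1 ≤ m) : detPoly m ≠ 0 := by
  intro h
  rw [detPoly, divX_eq_zero_iff] at h
  have := congrArg natDegree h
  rw [natDegree_chebyshev_C_comp_X_add_two, natDegree_C] at this
  omega

theorem det_geom_sum_B_mul_inv_A (m : ℕ) :
    (∑ j ∈ range m, (B * A⁻¹) ^ j).det = aeval y (detPoly m) := by
  have h := Matrix.two_sub_trace_mul_det_geom_sum det_B_mul_inv_A m
  rw [Matrix.trace_pow_eq_eval_chebyshev_C det_B_mul_inv_A, trace_B_mul_inv_A] at h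
  have h' := congrArg (aeval y) (X_mul_detPoly m)
  simp only [map_mul, aeval_X, map_sub, aeval_comp, map_add, Chebyshev.aeval_C, map_ofNat] at h'
  have hy : y ≠ 0 := by simp [y]
  refine mul_left_cancel₀ hy ?_
  linear_combination -h - h'

open Finset in
/-- For `S_m = I + BA⁻¹ + ⋯ + (BA⁻¹)^{m-1}` one has
`det S_{m+1} = det S_m + tr(BA⁻¹ + ⋯ + (BA⁻¹)^m) + 1`, and `det S_m` has total degree
`m - 1` in `s` and `y`. -/
theorem stmt_19 (m : ℕ) (hm : 1 ≤ m) :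
    (∑ j ∈ range (m + 1), (B * A⁻¹) ^ j).det =
      (∑ j ∈ range m, (B * A⁻¹) ^ j).det +
        (∑ j ∈ Icc 1 m, (B * A⁻¹) ^ j).trace + 1 ∧
    deg ((∑ j ∈ range m, (B * A⁻¹) ^ j).det) = ((m : ℤ) - 1 : ℤ) := by
  refine ⟨Matrix.det_geom_sum_succ_of_det_eq_one det_B_mul_inv_A m, ?_⟩
  rw [det_geom_sum_B_mul_inv_A, deg_aeval_y (detPoly_ne_zero hm), natDegree_detPoly,
    Nat.cast_sub hm, Nat.cast_one]
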